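/- Let r ∈ O be monic. For every a = (a1,a2) ∈ O² with |a| < |r| and gcd(a1,a2,r) = 1, there exists exactly one pair (d, c) with d ∈ O monic, d ∣ r, c = (c1,c2) ∈ O² primitive, |d·c1| ≤ |r|^{1/2} and |d·c2| < |r|^{1/2}, such that a/r lies on the generalised line L(d·c). -/

import Mathlib

set_option autoImplicit false

noncomputable section

open Polynomial Matrix
open scoped Classical

variable {Fq : Type} [Field Fq] [Fintype Fq]

/-- The absolute value on `O = Fq[t]`: `|x| = q ^ deg x` for `x ≠ 0`, and `|0| = 0`. -/
def Oabs (x : Fq[X]) : ℝ := if x = 0 then 0 else (Fintype.card Fq : ℝ) ^ x.natDegree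

/-- The maximum norm on pairs of polynomials. -/
def Oabs2 (a : Fq[X] × Fq[X]) : ℝ := max (Oabs a.1) (Oabs a.2)

/-- A pair `c = (c₁, c₂)` is primitive if `gcd(c₁,c₂) = 1` and either `c₁` is monic,
or `c₁ = 0` and `c₂` is monic. -/
def Primitive (c : Fq[X] × Fq[X]) : Prop :=
  IsCoprime c.1 c.2 ∧ (c.1.Monic ∨ (c.1 = 0 ∧ c.2.Monic))

/-- `gcd(a, b, r) = 1`: every common divisor of `a`, `b` and `r` is a unit. -/
def CoprimeTriple (a b r : Fq[X]) : Prop :=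
  ∀ p : Fq[X], p ∣ a → p ∣ b → p ∣ r → IsUnit p

/-- `a/r` lies on the generalised line `L(d·c)`: there is `k` with
`d(c₁a₁ + c₂a₂) = k·r` and `gcd(d,k) = 1`. -/
def OnLine (d : Fq[X]) (c : Fq[X] × Fq[X]) (r : Fq[X]) (a : Fq[X] × Fq[X]) : Prop :=
  ∃ k : Fq[X], d * (c.1 * a.1 + c.2 * a.2) = k * r ∧ IsCoprime d k

/-!
Existence is a pigeonhole (Dirichlet) argument: with `n = deg r`, the `F_q`-linear map
`(b₁, b₂) ↦ b₁a₁ + b₂a₂ mod r` on pairs with `2 deg b₁ ≤ n`, `2 deg b₂ < n` goes from a space of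
dimension `n + 1` to one of dimension `n`, so it kills some `b ≠ 0`. Write `b = g·c` with `c`
primitive and let `k/d` be `(c₁a₁ + c₂a₂)/r` in lowest terms; since `r ∣ g(c₁a₁ + c₂a₂)`, `d ∣ g`,
so `|d cᵢ| ≤ |bᵢ|`.

Uniqueness: for two such lines the cross determinant `D = (dc₁)(d'c₂') - (dc₂)(d'c₁')` satisfies
`r ∣ D aᵢ`, hence `r ∣ D` as `gcd(a₁, a₂, r) = 1`, while `|D| < |r|` by the size bounds. So
`D = 0`, primitivity forces `c = c'`, and then `d = d'` as both are the reduced denominator of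
`(c₁a₁ + c₂a₂)/r`.
-/

section FieldPolynomial

variable {K : Type} [Field K]

theorem exists_ne_zero_degree_lt_dvd {r : K[X]} (hr : r ≠ 0) (a : K[X] × K[X]) {s t : ℕ}
    (hst : r.natDegree < s + t) :
    ∃ b : K[X] × K[X], b ≠ 0 ∧ b.1.degree < s ∧ b.2.degree < t ∧ r ∣ b.1 * a.1 + b.2 * a.2 := by
  have := (AdjoinRoot.powerBasis hr).finite
  let f : K[X]_s × K[X]_t →ₗ[K] AdjoinRoot r :=
    (AdjoinRoot.mkₐ r).toLinearMap ∘ₗ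
      ((LinearMap.mulRight K a.1 ∘ₗ (K[X]_s).subtype).coprod
        (LinearMap.mulRight K a.2 ∘ₗ (K[X]_t).subtype))
  have hdim : Module.finrank K (AdjoinRoot r) < Module.finrank K (K[X]_s × K[X]_t) := by
    rwa [(AdjoinRoot.powerBasis hr).finrank, AdjoinRoot.powerBasis_dim,
      Module.finrank_eq_card_basis (degreeLT.basisProd K s t), Fintype.card_fin]
  obtain ⟨x, hx, hx0⟩ := Submodule.exists_mem_ne_zero_of_ne_bot (f.ker_ne_bot_of_finrank_lt hdim)
  refine ⟨(x.1, x.2), ?_, mem_degreeLT.mp x.1.2, mem_degreeLT.mp x.2.2,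
    AdjoinRoot.mk_eq_zero.mp hx⟩
  simpa [Prod.ext_iff] using hx0

theorem exists_reduced_fraction {r : K[X]} (hr : r.Monic) (S : K[X]) :
    ∃ d k : K[X], d.Monic ∧ d ∣ r ∧ d * S = k * r ∧ IsCoprime d k := by
  obtain ⟨d, k, hrd, hSk, hdk⟩ := extract_gcd r S
  have hgcd : (gcd r S).Monic := by
    simpa using monic_normalize (gcd_ne_zero_of_left (b := S) hr.ne_zero)
  exact ⟨d, k, hgcd.of_mul_monic_left (hrd ▸ hr), Dvd.intro_left _ hrd.symm,
    by linear_combination d * hSk - k * hrd, (gcd_isUnit_iff d k).mp hdk⟩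

theorem exists_mul_primitive {b : K[X] × K[X]} (hb : b ≠ 0) :
    ∃ (g : K[X]) (c : K[X] × K[X]), g ≠ 0 ∧ Primitive c ∧ b.1 = g * c.1 ∧ b.2 = g * c.2 := by
  obtain ⟨c₁, c₂, h₁, h₂, hu⟩ := extract_gcd b.1 b.2
  have hg : gcd b.1 b.2 ≠ 0 := fun h => hb (Prod.ext_iff.mpr ((gcd_eq_zero_iff _ _).mp h))
  have hc : IsCoprime c₁ c₂ := (gcd_isUnit_iff c₁ c₂).mp hu
  let u := normUnit (if c₁ = 0 then c₂ else c₁)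
  refine ⟨gcd b.1 b.2 * ↑u⁻¹, (c₁ * u, c₂ * u), mul_ne_zero hg u⁻¹.ne_zero,
    ⟨(isCoprime_mul_unit_right u.isUnit _ _).mpr hc, ?_⟩, ?_, ?_⟩
  · by_cases h0 : c₁ = 0
    · have hc₂ : c₂ ≠ 0 := (isCoprime_zero_left.mp (h0 ▸ hc)).ne_zero
      right
      refine ⟨by simp [h0], ?_⟩
      simp only [u, h0, if_true, ← normalize_apply]
      exact monic_normalize hc₂
    · left
      simp only [u, h0, if_false, ← normalize_apply]
      exact monic_normalize h0
  · rwa [mul_comm c₁, ← mul_assoc, Units.inv_mul_cancel_right]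
  · rwa [mul_comm c₂, ← mul_assoc, Units.inv_mul_cancel_right]

theorem Primitive.eq_of_mul_eq_mul {c c' : K[X] × K[X]} (hc : Primitive c) (hc' : Primitive c')
    (h : c.1 * c'.2 = c.2 * c'.1) : c = c' := by
  have h₁ : Associated c.1 c'.1 := associated_of_dvd_dvd
    (hc.1.dvd_of_dvd_mul_left ⟨c'.2, h.symm⟩)
    (hc'.1.dvd_of_dvd_mul_left ⟨c.2, by linear_combination h⟩)
  have h₂ : Associated c.2 c'.2 := associated_of_dvd_dvd
    (hc.1.symm.dvd_of_dvd_mul_left ⟨c'.1, h⟩)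
    (hc'.1.symm.dvd_of_dvd_mul_left ⟨c.1, by linear_combination -h⟩)
  rcases hc.2 with hm | ⟨h0, hm⟩
  · have h₁' : c.1 = c'.1 := eq_of_monic_of_associated hm
      (hc'.2.resolve_right fun h0' => hm.ne_zero (h₁.eq_zero_iff.mpr h0'.1)) h₁
    refine Prod.ext h₁' (mul_left_cancel₀ hm.ne_zero ?_)
    linear_combination -h + c.2 * h₁'
  · have h0' : c'.1 = 0 := h₁.eq_zero_iff.mp h0
    have hm' : c'.2.Monic := (hc'.2.resolve_left fun hm' => hm'.ne_zero h0').2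
    exact Prod.ext (h0.trans h0'.symm) (eq_of_monic_of_associated hm hm' h₂)

theorem OnLine.unique {d d' r : K[X]} {c a : K[X] × K[X]} (hd : d.Monic) (hd' : d'.Monic)
    (hr : r ≠ 0) (h : OnLine d c r a) (h' : OnLine d' c r a) : d = d' := by
  obtain ⟨k, hk, hdk⟩ := h
  obtain ⟨k', hk', hdk'⟩ := h'
  have hkk : d' * k = d * k' := mul_right_cancel₀ hr (by linear_combination d * hk' - d' * hk)
  exact eq_of_monic_of_associated hd hd' (associated_of_dvd_dvd
    (hdk.dvd_of_dvd_mul_right ⟨k', hkk⟩) (hdk'.dvd_of_dvd_mul_right ⟨k, hkk.symm⟩))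

theorem CoprimeTriple.dvd_of_dvd_mul {a₁ a₂ r D : K[X]} (hco : CoprimeTriple a₁ a₂ r)
    (h₁ : r ∣ D * a₁) (h₂ : r ∣ D * a₂) : r ∣ D := by
  have hunit : IsUnit (gcd (gcd a₁ a₂) r) :=
    hco _ ((gcd_dvd_left _ _).trans (gcd_dvd_left _ _))
      ((gcd_dvd_left _ _).trans (gcd_dvd_right _ _)) (gcd_dvd_right _ _)
  have hcop : IsCoprime r (gcd a₁ a₂) := ((gcd_isUnit_iff _ _).mp hunit).symm
  exact hcop.dvd_of_dvd_mul_right ((dvd_gcd h₁ h₂).trans (gcd_mul_left' D a₁ a₂).dvd)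

end FieldPolynomial

section Oabs

theorem Oabs_eq_cardPowDegree (x : Fq[X]) : Oabs x = (cardPowDegree x : ℝ) := by
  rw [Oabs, cardPowDegree_apply]
  split_ifs <;> simp

theorem Oabs_nonneg (x : Fq[X]) : 0 ≤ Oabs x := by
  rw [Oabs_eq_cardPowDegree]
  exact_mod_cast cardPowDegree.nonneg x

theorem Oabs_mul (x y : Fq[X]) : Oabs (x * y) = Oabs x * Oabs y := by
  simp only [Oabs_eq_cardPowDegree, map_mul, Int.cast_mul]

theorem Oabs_lt_Oabs_iff {x y : Fq[X]} : Oabs x < Oabs y ↔ x.degree < y.degree := by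
  rw [Oabs_eq_cardPowDegree, Oabs_eq_cardPowDegree, Int.cast_lt]
  exact cardPowDegree_isEuclidean.map_lt_map_iff

theorem Oabs_le_of_dvd {x y : Fq[X]} (h : x ∣ y) (hy : y ≠ 0) : Oabs x ≤ Oabs y :=
  not_lt.mp fun hlt => (degree_le_of_dvd h hy).not_gt (Oabs_lt_Oabs_iff.mp hlt)

theorem Oabs_mul_le_of_dvd {d g : Fq[X]} (h : d ∣ g) (hg : g ≠ 0) (x : Fq[X]) :
    Oabs (d * x) ≤ Oabs (g * x) := by
  rw [Oabs_mul, Oabs_mul]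
  exact mul_le_mul_of_nonneg_right (Oabs_le_of_dvd h hg) (Oabs_nonneg x)

theorem Oabs_sub_lt {x y r : Fq[X]} (hx : Oabs x < Oabs r) (hy : Oabs y < Oabs r) :
    Oabs (x - y) < Oabs r := by
  rw [Oabs_lt_Oabs_iff] at *
  exact (degree_sub_le x y).trans_lt (max_lt hx hy)

theorem eq_zero_of_dvd_of_Oabs_lt {r D : Fq[X]} (h : r ∣ D) (hD : Oabs D < Oabs r) : D = 0 :=
  eq_zero_of_dvd_of_degree_lt h (Oabs_lt_Oabs_iff.mp hD)

theorem Oabs_mul_lt_of_le_sqrt_of_lt_sqrt {u v r : Fq[X]} (hu : Oabs u ≤ √(Oabs r))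
    (hv : Oabs v < √(Oabs r)) : Oabs (u * v) < Oabs r := by
  rw [Oabs_mul, ← Real.mul_self_sqrt (Oabs_nonneg r)]
  exact mul_lt_mul' hu hv (Oabs_nonneg v) ((Oabs_nonneg v).trans_lt hv)

theorem Oabs_le_sqrt_of_degree_lt {x r : Fq[X]} (hr : r ≠ 0)
    (hx : x.degree < (r.natDegree / 2 + 1 : ℕ)) : Oabs x ≤ √(Oabs r) := by
  rcases eq_or_ne x 0 with rfl | hx0
  · simp [Oabs]
  have hdeg := (natDegree_lt_iff_degree_lt hx0).mpr hx
  rw [Oabs, Oabs, if_neg hx0, if_neg hr, Real.le_sqrt (by positivity) (by positivity), ← pow_mul]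
  exact pow_le_pow_right₀ (mod_cast Fintype.card_pos (α := Fq)) (by omega)

theorem Oabs_lt_sqrt_of_degree_lt {x r : Fq[X]} (hr : r ≠ 0)
    (hx : x.degree < ((r.natDegree + 1) / 2 : ℕ)) : Oabs x < √(Oabs r) := by
  rcases eq_or_ne x 0 with rfl | hx0
  · rw [Oabs, if_pos rfl, Real.sqrt_pos, Oabs, if_neg hr]
    positivity
  have hdeg := (natDegree_lt_iff_degree_lt hx0).mpr hx
  rw [Oabs, Oabs, if_neg hx0, if_neg hr, Real.lt_sqrt (by positivity), ← pow_mul]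
  exact pow_lt_pow_right₀ (mod_cast Fintype.one_lt_card (α := Fq)) (by omega)

end Oabs

theorem exists_onLine {r : Fq[X]} (hr : r.Monic) (a : Fq[X] × Fq[X]) :
    ∃ dc : Fq[X] × (Fq[X] × Fq[X]),
      dc.1.Monic ∧ dc.1 ∣ r ∧ Primitive dc.2 ∧
      Oabs (dc.1 * dc.2.1) ≤ √(Oabs r) ∧ Oabs (dc.1 * dc.2.2) < √(Oabs r) ∧
      OnLine dc.1 dc.2 r a := by
  obtain ⟨b, hb, hb₁, hb₂, hrb⟩ := exists_ne_zero_degree_lt_dvd hr.ne_zero a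
    (s := r.natDegree / 2 + 1) (t := (r.natDegree + 1) / 2) (by omega)
  obtain ⟨g, c, hg, hc, hbc₁, hbc₂⟩ := exists_mul_primitive hb
  obtain ⟨d, k, hd, hdr, hk, hdk⟩ := exists_reduced_fraction hr (c.1 * a.1 + c.2 * a.2)
  have hdg : d ∣ g := by
    obtain ⟨m, hm⟩ := hrb
    refine hdk.dvd_of_dvd_mul_right ((mul_dvd_mul_iff_right hr.ne_zero).mp ⟨m, ?_⟩)
    rw [hbc₁, hbc₂] at hm
    linear_combination d * hm - g * hk
  refine ⟨(d, c), hd, hdr, hc, ?_, ?_, k, hk, hdk⟩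
  · exact (Oabs_mul_le_of_dvd hdg hg c.1).trans (hbc₁ ▸ Oabs_le_sqrt_of_degree_lt hr.ne_zero hb₁)
  · exact (Oabs_mul_le_of_dvd hdg hg c.2).trans_lt (hbc₂ ▸ Oabs_lt_sqrt_of_degree_lt hr.ne_zero hb₂)

theorem eq_of_onLine {r : Fq[X]} (hr : r ≠ 0) {a : Fq[X] × Fq[X]}
    (hco : CoprimeTriple a.1 a.2 r) {d d' : Fq[X]} {c c' : Fq[X] × Fq[X]}
    (hd : d.Monic) (hd' : d'.Monic) (hc : Primitive c) (hc' : Primitive c')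
    (hc₁ : Oabs (d * c.1) ≤ √(Oabs r)) (hc₂ : Oabs (d * c.2) < √(Oabs r))
    (hc₁' : Oabs (d' * c'.1) ≤ √(Oabs r)) (hc₂' : Oabs (d' * c'.2) < √(Oabs r))
    (hl : OnLine d c r a) (hl' : OnLine d' c' r a) : (d, c) = (d', c') := by
  obtain ⟨k, hk, hdk⟩ := hl
  obtain ⟨k', hk', hdk'⟩ := hl'
  set D := d * c.1 * (d' * c'.2) - d * c.2 * (d' * c'.1)
  have hD₁ : r ∣ D * a.1 :=
    ⟨d' * c'.2 * k - d * c.2 * k', by linear_combination d' * c'.2 * hk - d * c.2 * hk'⟩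
  have hD₂ : r ∣ D * a.2 :=
    ⟨d * c.1 * k' - d' * c'.1 * k, by linear_combination d * c.1 * hk' - d' * c'.1 * hk⟩
  have hD_lt : Oabs D < Oabs r := Oabs_sub_lt (Oabs_mul_lt_of_le_sqrt_of_lt_sqrt hc₁ hc₂')
    (mul_comm (d * c.2) _ ▸ Oabs_mul_lt_of_le_sqrt_of_lt_sqrt hc₁' hc₂)
  have hD0 : D = 0 := eq_zero_of_dvd_of_Oabs_lt (hco.dvd_of_dvd_mul hD₁ hD₂) hD_lt
  obtain rfl : c = c' := hc.eq_of_mul_eq_mul hc' <|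
    mul_left_cancel₀ (mul_ne_zero hd.ne_zero hd'.ne_zero) (by linear_combination hD0)
  rw [OnLine.unique hd hd' hr ⟨k, hk, hdk⟩ ⟨k', hk', hdk'⟩]

theorem stmt_18_general (Fq : Type) [Field Fq] [Fintype Fq]
    (r : Fq[X]) (hr : r.Monic)
    (a : Fq[X] × Fq[X]) (hco : CoprimeTriple a.1 a.2 r) :
    ∃! dc : Fq[X] × (Fq[X] × Fq[X]),
      dc.1.Monic ∧ dc.1 ∣ r ∧ Primitive dc.2 ∧
      Oabs (dc.1 * dc.2.1) ≤ Real.sqrt (Oabs r) ∧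
      Oabs (dc.1 * dc.2.2) < Real.sqrt (Oabs r) ∧
      OnLine dc.1 dc.2 r a := by
  obtain ⟨dc, hdc⟩ := exists_onLine hr a
  refine ⟨dc, hdc, ?_⟩
  rintro ⟨d', c'⟩ ⟨hd', -, hc', hc₁', hc₂', hl'⟩
  obtain ⟨hd, -, hc, hc₁, hc₂, hl⟩ := hdc
  exact eq_of_onLine hr.ne_zero hco hd' hd hc' hc hc₁' hc₂' hc₁ hc₂ hl' hl

/-- For `r` monic, every reduced rational point `a/r` lies on exactly one generalised
line `L(d·c)` with `d` monic, `d ∣ r`, `c` primitive, `|d·c₁| ≤ |r|^{1/2}` and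
`|d·c₂| < |r|^{1/2}`. -/
theorem stmt_18 (Fq : Type) [Field Fq] [Fintype Fq]
    (r : Fq[X]) (hr : r.Monic)
    (a : Fq[X] × Fq[X]) (ha : Oabs2 a < Oabs r) (hco : CoprimeTriple a.1 a.2 r) :
    ∃! dc : Fq[X] × (Fq[X] × Fq[X]),
      dc.1.Monic ∧ dc.1 ∣ r ∧ Primitive dc.2 ∧
      Oabs (dc.1 * dc.2.1) ≤ Real.sqrt (Oabs r) ∧
      Oabs (dc.1 * dc.2.2) < Real.sqrt (Oabs r) ∧
      OnLine dc.1 dc.2 r a :=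
  stmt_18_general Fq r hr a hco
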